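/- Define G_n(t) = (1/ω_n) e^{−g_n t} sinh(ω_n t) for n with g_n² > b_n, ω_n = √(g_n² − b_n). Then for all t ≥ 0, 0 ≤ G_n(t) ≤ (1/ω_n) e^{−(g_n − ω_n) t} ≤ (1/ω_n) e^{−p_λ t}, where p_λ = π²/(επ² + a_λ l²) and a_λ = α + ελ²/4. -/

import Mathlib

/-!
Since `sinh x ≤ eˣ / 2`, the function `G` is dominated by `e^{-(g - ω) t} / ω`, so it suffices
to show `p ≤ g - ω`. Rationalising, `g - ω = b / (g + ω) ≥ b / (2 g) = b / (α + ε b)`, and the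
map `x ↦ x / (α + ε x)` is increasing; as `b ≥ π² / l² + λ² / 4` (because `n ≥ 1`), a last
comparison of fractions bounds `b / (α + ε b)` from below by `p`.
-/

open Real

lemma Real.sinh_le_exp_div_two (x : ℝ) : sinh x ≤ exp x / 2 := by
  rw [sinh_eq]
  linarith [exp_pos (-x)]

lemma one_div_mul_exp_mul_sinh_nonneg {g ω t : ℝ} (hω : 0 ≤ ω) (ht : 0 ≤ t) :
    0 ≤ 1 / ω * exp (-g * t) * sinh (ω * t) := by
  have : 0 ≤ sinh (ω * t) := sinh_nonneg_iff.2 (mul_nonneg hω ht)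
  positivity

lemma one_div_mul_exp_mul_sinh_le {ω : ℝ} (hω : 0 ≤ ω) (g t : ℝ) :
    1 / ω * exp (-g * t) * sinh (ω * t) ≤ 1 / ω * exp (-(g - ω) * t) := by
  have hsinh : sinh (ω * t) ≤ exp (ω * t) := by
    linarith [sinh_le_exp_div_two (ω * t), exp_pos (ω * t)]
  calc 1 / ω * exp (-g * t) * sinh (ω * t)
      ≤ 1 / ω * exp (-g * t) * exp (ω * t) := by gcongr
    _ = 1 / ω * exp (-(g - ω) * t) := by rw [mul_assoc, ← exp_add]; ring_nf

lemma div_two_mul_le_sub_sqrt_sq_sub {g b : ℝ} (hg : 0 < g) (hb : 0 ≤ b) (hbg : b ≤ g ^ 2) :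
    b / (2 * g) ≤ g - √(g ^ 2 - b) := by
  have hs : √(g ^ 2 - b) ^ 2 = g ^ 2 - b := sq_sqrt (by linarith)
  have hs_le : √(g ^ 2 - b) ≤ g := by
    rw [sqrt_le_left hg.le]
    linarith
  rw [div_le_iff₀ (by positivity)]
  nlinarith [sqrt_nonneg (g ^ 2 - b)]

lemma div_add_mul_self_le_div_add_mul_self {α ε x y : ℝ} (hα : 0 < α) (hε : 0 ≤ ε)
    (hx : 0 ≤ x) (hxy : x ≤ y) : x / (α + ε * x) ≤ y / (α + ε * y) := by
  rw [div_le_div_iff₀ (by positivity) (by nlinarith)]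
  nlinarith

lemma div_mul_add_add_mul_le_div_add_mul {α ε c d s b : ℝ} (hα : 0 < α) (hε : 0 ≤ ε)
    (hc : 0 ≤ c) (hd : 0 ≤ d) (hs : 0 < s) (hb : c / s + d ≤ b) :
    c / (ε * c + (α + ε * d) * s) ≤ b / (α + ε * b) := by
  have hcs : 0 ≤ c / s := by positivity
  calc c / (ε * c + (α + ε * d) * s)
      = c / s / (α + ε * (c / s + d)) := by field_simp; ring_nf
    _ ≤ (c / s + d) / (α + ε * (c / s + d)) := by gcongr; linarith
    _ ≤ b / (α + ε * b) := div_add_mul_self_le_div_add_mul_self hα hε (by positivity) hb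

lemma sq_div_le_sq_nat_mul_div {c l : ℝ} {n : ℕ} (hn : 0 < n) :
    c ^ 2 / l ^ 2 ≤ (n * c / l) ^ 2 := by
  have hn1 : (1 : ℝ) ≤ (n : ℝ) ^ 2 := one_le_pow₀ (by exact_mod_cast hn)
  rw [div_pow, mul_pow]
  gcongr
  nlinarith [sq_nonneg c]

theorem Gn_bound_general (l lam alpha eps : ℝ) (hl : 0 < l)
    (halpha : 0 < alpha) (heps : 0 < eps) (n : ℕ) (hn : 0 < n)
    (γ b g ω a p : ℝ)
    (hγ : γ = n * π / l) (hb : b = γ ^ 2 + lam ^ 2 / 4)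
    (hg : g = (alpha + eps * b) / 2) (hlt : b < g ^ 2)
    (hω : ω = Real.sqrt (g ^ 2 - b))
    (ha : a = alpha + eps * lam ^ 2 / 4)
    (hp : p = π ^ 2 / (eps * π ^ 2 + a * l ^ 2))
    (G : ℝ → ℝ)
    (hG : ∀ t, G t = (1 / ω) * Real.exp (-g * t) * Real.sinh (ω * t)) :
    ∀ t : ℝ, 0 ≤ t →
      0 ≤ G t ∧ G t ≤ (1 / ω) * Real.exp (-(g - ω) * t) ∧
      (1 / ω) * Real.exp (-(g - ω) * t) ≤ (1 / ω) * Real.exp (-p * t) := by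
  have hb_lower : π ^ 2 / l ^ 2 + lam ^ 2 / 4 ≤ b := by
    rw [hb, hγ]
    gcongr
    exact sq_div_le_sq_nat_mul_div hn
  have hb_pos : 0 < b := by
    have : 0 < π ^ 2 / l ^ 2 := by positivity
    nlinarith [sq_nonneg lam]
  have hg_pos : 0 < g := by rw [hg]; positivity
  have hω_nonneg : 0 ≤ ω := hω ▸ sqrt_nonneg _
  have hp_le : p ≤ g - ω := calc
    p ≤ b / (alpha + eps * b) := by
      rw [hp, ha, mul_div_assoc]
      exact div_mul_add_add_mul_le_div_add_mul halpha heps.le (sq_nonneg π)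
        (by positivity) (by positivity) hb_lower
    _ = b / (2 * g) := by rw [hg]; ring
    _ ≤ g - ω := hω ▸ div_two_mul_le_sub_sqrt_sq_sub hg_pos hb_pos.le hlt.le
  intro t ht
  rw [hG]
  refine ⟨one_div_mul_exp_mul_sinh_nonneg hω_nonneg ht,
    one_div_mul_exp_mul_sinh_le hω_nonneg g t, ?_⟩
  gcongr

theorem Gn_bound (l lam alpha eps : ℝ) (hl : 0 < l) (hlam : 0 < lam)
    (halpha : 0 < alpha) (heps : 0 < eps) (n : ℕ) (hn : 0 < n)
    (γ b g ω a p : ℝ)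
    (hγ : γ = n * π / l) (hb : b = γ ^ 2 + lam ^ 2 / 4)
    (hg : g = (alpha + eps * b) / 2) (hlt : b < g ^ 2)
    (hω : ω = Real.sqrt (g ^ 2 - b))
    (ha : a = alpha + eps * lam ^ 2 / 4)
    (hp : p = π ^ 2 / (eps * π ^ 2 + a * l ^ 2))
    (G : ℝ → ℝ)
    (hG : ∀ t, G t = (1 / ω) * Real.exp (-g * t) * Real.sinh (ω * t)) :
    ∀ t : ℝ, 0 ≤ t →
      0 ≤ G t ∧ G t ≤ (1 / ω) * Real.exp (-(g - ω) * t) ∧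
      (1 / ω) * Real.exp (-(g - ω) * t) ≤ (1 / ω) * Real.exp (-p * t) :=
  Gn_bound_general l lam alpha eps hl halpha heps n hn γ b g ω a p hγ hb hg hlt hω ha hp G hG
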